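/- arXiv:2102.03695 — 6 statements merged into one kernel-verified Lean document; each statement's English description precedes it below -/
import Mathlib

section
/- Let p be an odd prime, F = ℚ_p with ring of integers ℤ_p, residue cardinality q = p, uniformizer ϖ = p, normalized valuation v, and Haar measure dx on ℚ_p with vol(ℤ_p) = 1. Let χ₁, χ₂ : F^× → ℂ^× be unramified unitary characters (χ_i(x) = z_i^{v(x)} with |z_i| = 1). Then the integral q·∫_{ℤ_p} χ₁(1+a)|1+a|^{-1/2} · χ₂(a)|a|^{-1/2} da is absolutely convergent and equals q − 2 + (q−1)·(q^{-1/2}z₁ + q^{-1/2}z₂ − 2q^{-1}z₁z₂) / ((1 − q^{-1/2}z₁)(1 − q^{-1/2}z₂)). -/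
/-!
For `a ∈ ℤ_p` at least one of `a`, `1 + a` is a unit. Writing `gᵢ(x) = χᵢ(x)|x|^{-1/2} = wᵢ^{v(x)}`,
which is `1` on units, the integrand `g₁(1 + a) g₂(a)` therefore equals `g₁(1 + a) + g₂(a) - 1` on
`ℤ_p`. By translation invariance the integral becomes a sum of two local zeta integrals, each a
geometric series over the shells `v(x) = n` of measure `(1 - p⁻¹) p⁻ⁿ`:
`∫_{ℤ_p} w^{v(x)} dx = (1 - p⁻¹) / (1 - w / p)`.
-/

open scoped Classical ENNReal
open Function MeasureTheory Metric Set

lemma Complex.norm_lt_one_of_sq_eq_inv_natCast {n : ℕ} (hn : 1 < n) {q : ℂ}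
    (hq : q ^ 2 = (n : ℂ)⁻¹) : ‖q‖ < 1 := by
  refine (pow_lt_one_iff_of_nonneg (norm_nonneg _) two_ne_zero).1 ?_
  rw [← norm_pow, hq, norm_inv, Complex.norm_natCast]
  exact inv_lt_one_of_one_lt₀ (mod_cast hn)

section Ultrametric

variable {G : Type*} [NormedAddCommGroup G] [IsUltrametricDist G] {c : G} {r : ℝ}

lemma preimage_add_left_closedBall_zero (hc : ‖c‖ ≤ r) :
    (c + ·) ⁻¹' closedBall 0 r = closedBall 0 r := by
  rw [preimage_add_closedBall, zero_sub]
  exact (IsUltrametricDist.closedBall_eq_of_mem (by simpa using hc)).symm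

variable [MeasurableSpace G] [BorelSpace G] {μ : Measure G} [μ.IsAddLeftInvariant]
  {E : Type*} [NormedAddCommGroup E] {f : G → E}

lemma integrableOn_closedBall_comp_add_left_iff (hc : ‖c‖ ≤ r) :
    IntegrableOn (fun x => f (c + x)) (closedBall 0 r) μ ↔ IntegrableOn f (closedBall 0 r) μ := by
  conv_lhs => rw [← preimage_add_left_closedBall_zero hc]
  exact (measurePreserving_add_left μ c).integrableOn_comp_preimage
    (MeasurableEquiv.addLeft c).measurableEmbedding

lemma setIntegral_closedBall_comp_add_left [NormedSpace ℝ E] (hc : ‖c‖ ≤ r) :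
    ∫ x in closedBall 0 r, f (c + x) ∂μ = ∫ x in closedBall 0 r, f x ∂μ := by
  conv_lhs => rw [← preimage_add_left_closedBall_zero hc]
  exact (measurePreserving_add_left μ c).setIntegral_preimage_emb
    (MeasurableEquiv.addLeft c).measurableEmbedding f _

end Ultrametric

namespace Padic

variable {p : ℕ} [hp : Fact p.Prime]

lemma valuation_eq_of_norm_eq {x : ℚ_[p]} {n : ℤ} (h : ‖x‖ = (p : ℝ) ^ (-n)) :
    x.valuation = n := by
  have hx : x ≠ 0 := by
    rintro rfl
    exact (zpow_pos (mod_cast hp.out.pos) _).ne' (h.symm.trans norm_zero)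
  rw [norm_eq_zpow_neg_valuation hx] at h
  exact neg_inj.1 (zpow_right_injective₀ (mod_cast hp.out.pos) (mod_cast hp.out.one_lt.ne') h)

lemma valuation_neg (x : ℚ_[p]) : (-x).valuation = x.valuation := by
  rcases eq_or_ne x 0 with rfl | hx
  · rw [neg_zero]
  · exact valuation_eq_of_norm_eq (by rw [norm_neg, norm_eq_zpow_neg_valuation hx])

lemma valuation_eq_zero_or_valuation_one_add_eq_zero {a : ℚ_[p]} (ha : ‖a‖ ≤ 1) :
    a.valuation = 0 ∨ (1 + a).valuation = 0 := by
  rcases ha.lt_or_eq with ha | ha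
  · right
    apply valuation_eq_of_norm_eq
    rw [neg_zero, zpow_zero, add_eq_max_of_ne (by simpa using ha.ne'), norm_one]
    exact max_eq_left ha.le
  · left
    exact valuation_eq_of_norm_eq (by simpa using ha)

lemma closedBall_zero_one_eq_biUnion (n : ℕ) :
    closedBall (0 : ℚ_[p]) 1 =
      ⋃ m ∈ Finset.range (p ^ n), closedBall (m : ℚ_[p]) (p ^ (-n : ℤ)) := by
  ext x
  simp only [mem_iUnion, Finset.mem_range, mem_closedBall, dist_eq_norm, sub_zero]
  constructor
  · intro hx
    let y : ℤ_[p] := ⟨x, hx⟩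
    refine ⟨y.appr n, y.appr_lt n, ?_⟩
    have := (y - y.appr n).norm_le_pow_iff_mem_span_pow n |>.2 (y.appr_spec n)
    rwa [PadicInt.norm_def, PadicInt.coe_sub, PadicInt.coe_natCast] at this
  · rintro ⟨m, -, hm⟩
    calc ‖x‖ = ‖(x - m) + m‖ := by rw [sub_add_cancel]
      _ ≤ max ‖x - m‖ ‖(m : ℚ_[p])‖ := nonarchimedean _ _
      _ ≤ 1 := max_le (hm.trans (zpow_le_one_of_nonpos₀ (mod_cast hp.out.one_le) (by omega)))
          (by simpa using norm_int_le_one (p := p) m)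

lemma pairwiseDisjoint_closedBall_natCast (n : ℕ) :
    (Finset.range (p ^ n) : Set ℕ).PairwiseDisjoint
      fun m => closedBall (m : ℚ_[p]) (p ^ (-n : ℤ)) := by
  intro a ha b hb hab
  refine (IsUltrametricDist.closedBall_eq_or_disjoint _ _ _).resolve_left fun h => hab ?_
  have hmem : (a : ℚ_[p]) ∈ closedBall (b : ℚ_[p]) (p ^ (-n : ℤ)) :=
    h ▸ mem_closedBall_self (by positivity)
  rw [mem_closedBall, dist_eq_norm, show (a : ℚ_[p]) - b = ((a - b : ℤ) : ℚ_[p]) by push_cast; ring,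
    norm_int_le_pow_iff_dvd] at hmem
  simp only [Finset.coe_range, mem_Iio] at ha hb
  zify at ha hb
  have := Int.eq_zero_of_abs_lt_dvd hmem (by rw [abs_lt]; omega)
  omega

lemma ball_zero_zpow_eq_closedBall (m : ℤ) :
    ball (0 : ℚ_[p]) (p ^ m) = closedBall 0 (p ^ (m - 1)) := by
  ext x
  simp only [mem_ball_zero_iff, mem_closedBall_zero_iff, norm_lt_pow_iff_norm_le_pow_sub_one]

lemma closedBall_zero_one_sdiff_zero_eq_iUnion_sphere :
    closedBall (0 : ℚ_[p]) 1 \ {0} = ⋃ n : ℕ, sphere 0 (p ^ (-n : ℤ)) := by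
  ext x
  simp only [mem_sdiff, mem_closedBall_zero_iff, mem_singleton_iff, mem_iUnion,
    mem_sphere_zero_iff_norm]
  constructor
  · rintro ⟨hx1, hx0⟩
    refine ⟨x.valuation.toNat, ?_⟩
    rw [norm_eq_zpow_neg_valuation hx0, Int.toNat_of_nonneg ((norm_le_one_iff_val_nonneg x).1 hx1)]
  · rintro ⟨n, hn⟩
    refine ⟨hn ▸ zpow_le_one_of_nonpos₀ (mod_cast hp.out.one_le) (by omega), ?_⟩
    rintro rfl
    exact (zpow_pos (mod_cast hp.out.pos) _).ne' (hn.symm.trans norm_zero)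

lemma pairwise_disjoint_sphere_zpow :
    Pairwise (Disjoint on fun n : ℕ => sphere (0 : ℚ_[p]) (p ^ (-n : ℤ))) := by
  refine fun m n hmn => disjoint_left.2 fun x hm hn => hmn ?_
  rw [mem_sphere_zero_iff_norm] at hm hn
  exact_mod_cast (valuation_eq_of_norm_eq hm).symm.trans (valuation_eq_of_norm_eq hn)

/-- With `w = z q^{1/2}`, `zpowValuation w x = χ(x) |x|^{-1/2}` for the unramified character
with `χ(ϖ) = z`. -/
noncomputable def zpowValuation (w : ℂ) (x : ℚ_[p]) : ℂ :=
  if x = 0 then 0 else w ^ x.valuation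

lemma zpowValuation_eqOn_sphere (w : ℂ) (n : ℤ) :
    EqOn (zpowValuation w) (fun _ => w ^ n) (sphere (0 : ℚ_[p]) (p ^ (-n))) := by
  intro x hx
  have hx0 : x ≠ 0 := ne_of_mem_sphere hx (zpow_pos (mod_cast hp.out.pos) _).ne'
  rw [mem_sphere_zero_iff_norm] at hx
  simp only [zpowValuation, if_neg hx0, valuation_eq_of_norm_eq hx]

lemma zpowValuation_one_add_mul_eq {a : ℚ_[p]} (ha : ‖a‖ ≤ 1) (w₁ w₂ : ℂ) :
    zpowValuation w₁ (1 + a) * zpowValuation w₂ a =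
      zpowValuation w₁ (1 + a) + zpowValuation w₂ a - 1 := by
  by_cases ha0 : a = 0
  · simp [zpowValuation, ha0, valuation_one]
  by_cases ha1 : 1 + a = 0
  · simp [zpowValuation, eq_neg_of_add_eq_zero_right ha1, valuation_neg, valuation_one]
  simp only [zpowValuation, if_neg ha0, if_neg ha1]
  rcases valuation_eq_zero_or_valuation_one_add_eq_zero ha with h | h <;>
    simp only [h, zpow_zero] <;> ring

lemma norm_inv_natCast_mul_lt_one {w : ℂ} (hw : ‖w‖ < p) : ‖(p : ℂ)⁻¹ * w‖ < 1 := by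
  rwa [norm_mul, norm_inv, Complex.norm_natCast, inv_mul_lt_one₀ (mod_cast hp.out.pos)]

lemma eqOn_zpowValuation_one_add_mul (w₁ w₂ : ℂ) :
    EqOn (fun a => zpowValuation w₁ (1 + a) * zpowValuation w₂ a)
      (fun a => zpowValuation w₁ (1 + a) + zpowValuation w₂ a - 1) (closedBall (0 : ℚ_[p]) 1) :=
  fun _ ha => zpowValuation_one_add_mul_eq (mem_closedBall_zero_iff.1 ha) w₁ w₂

section Measure

variable [MeasurableSpace ℚ_[p]] [BorelSpace ℚ_[p]] (μ : Measure ℚ_[p]) [μ.IsAddHaarMeasure]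

lemma measureReal_closedBall_zpow (hμ : μ (closedBall 0 1) = 1) (n : ℕ) :
    μ.real (closedBall (0 : ℚ_[p]) (p ^ (-n : ℤ))) = (p : ℝ) ^ (-n : ℤ) := by
  have hcover : (p : ℝ≥0∞) ^ n * μ (closedBall 0 (p ^ (-n : ℤ))) = 1 := by
    rw [← hμ, closedBall_zero_one_eq_biUnion n, measure_biUnion_finset
      (pairwiseDisjoint_closedBall_natCast n) fun _ _ => measurableSet_closedBall]
    simp only [Measure.addHaar_closedBall_center, Finset.sum_const, Finset.card_range,
      nsmul_eq_mul]
    push_cast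
    rfl
  rw [measureReal_def, ENNReal.eq_inv_of_mul_eq_one_left ((mul_comm _ _).trans hcover),
    ENNReal.toReal_inv, ENNReal.toReal_pow, ENNReal.toReal_natCast, zpow_neg, zpow_natCast]

lemma measureReal_sphere_zpow (hμ : μ (closedBall 0 1) = 1) (n : ℕ) :
    μ.real (sphere (0 : ℚ_[p]) (p ^ (-n : ℤ))) = (1 - (p : ℝ)⁻¹) * p ^ (-n : ℤ) := by
  have hsub : closedBall (0 : ℚ_[p]) (p ^ (-(n + 1 : ℕ) : ℤ)) ⊆ closedBall 0 (p ^ (-n : ℤ)) :=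
    closedBall_subset_closedBall (zpow_le_zpow_right₀ (mod_cast hp.out.one_le) (by omega))
  rw [← closedBall_sdiff_ball, ball_zero_zpow_eq_closedBall, show -(n : ℤ) - 1 = -(n + 1 : ℕ) by
    push_cast; ring, measureReal_sdiff hsub measurableSet_closedBall
    measure_closedBall_lt_top.ne, measureReal_closedBall_zpow μ hμ,
    measureReal_closedBall_zpow μ hμ]
  have hp0 : (p : ℝ) ≠ 0 := mod_cast hp.out.ne_zero
  rw [Nat.cast_succ, neg_add, zpow_add₀ hp0, zpow_neg_one]
  ring

lemma setIntegral_sphere_zpowValuation (hμ : μ (closedBall 0 1) = 1) (w : ℂ) (n : ℕ) :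
    ∫ x in sphere (0 : ℚ_[p]) (p ^ (-n : ℤ)), zpowValuation w x ∂μ =
      (1 - (p : ℂ)⁻¹) * ((p : ℂ)⁻¹ * w) ^ n := by
  rw [setIntegral_congr_fun isClosed_sphere.measurableSet (zpowValuation_eqOn_sphere w n),
    setIntegral_const, measureReal_sphere_zpow μ hμ, Complex.real_smul]
  push_cast
  rw [zpow_neg, zpow_natCast, zpow_natCast]
  ring

lemma setIntegral_sphere_norm_zpowValuation (hμ : μ (closedBall 0 1) = 1) (w : ℂ) (n : ℕ) :
    ∫ x in sphere (0 : ℚ_[p]) (p ^ (-n : ℤ)), ‖zpowValuation w x‖ ∂μ =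
      (1 - (p : ℝ)⁻¹) * ‖(p : ℂ)⁻¹ * w‖ ^ n := by
  rw [setIntegral_congr_fun isClosed_sphere.measurableSet
      fun x hx => congrArg norm (zpowValuation_eqOn_sphere w n hx),
    setIntegral_const, measureReal_sphere_zpow μ hμ, smul_eq_mul, zpow_neg, zpow_natCast,
    norm_zpow, zpow_natCast, norm_mul, norm_inv, Complex.norm_natCast]
  ring

lemma closedBall_ae_eq_iUnion_sphere :
    closedBall (0 : ℚ_[p]) 1 =ᵐ[μ] ⋃ n : ℕ, sphere 0 (p ^ (-n : ℤ)) := by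
  rw [← closedBall_zero_one_sdiff_zero_eq_iUnion_sphere]
  exact (sdiff_null_ae_eq_self (measure_singleton 0)).symm

variable {μ}

lemma integrableOn_zpowValuation (hμ : μ (closedBall 0 1) = 1) {w : ℂ} (hw : ‖w‖ < p) :
    IntegrableOn (zpowValuation w) (closedBall 0 1) μ := by
  refine IntegrableOn.congr_set_ae ?_ (closedBall_ae_eq_iUnion_sphere μ)
  refine integrableOn_iUnion_of_summable_integral_norm (fun n => ?_) ?_
  · exact (integrableOn_const isBounded_sphere.measure_lt_top.ne).congr_fun
      (zpowValuation_eqOn_sphere w n).symm isClosed_sphere.measurableSet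
  · simpa only [setIntegral_sphere_norm_zpowValuation μ hμ] using
      (summable_geometric_of_lt_one (norm_nonneg _) (norm_inv_natCast_mul_lt_one hw)).mul_left _

lemma setIntegral_zpowValuation (hμ : μ (closedBall 0 1) = 1) {w : ℂ} (hw : ‖w‖ < p) :
    ∫ x in closedBall 0 1, zpowValuation w x ∂μ = (1 - (p : ℂ)⁻¹) / (1 - (p : ℂ)⁻¹ * w) := by
  have hsum := hasSum_integral_iUnion (fun _ => isClosed_sphere.measurableSet)
    pairwise_disjoint_sphere_zpow
    ((integrableOn_zpowValuation hμ hw).congr_set_ae (closedBall_ae_eq_iUnion_sphere μ).symm)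
  rw [funext (setIntegral_sphere_zpowValuation μ hμ w)] at hsum
  rw [setIntegral_congr_set (closedBall_ae_eq_iUnion_sphere μ), div_eq_mul_inv]
  exact hsum.unique
    ((hasSum_geometric_of_norm_lt_one (norm_inv_natCast_mul_lt_one hw)).mul_left _)

lemma integrableOn_zpowValuation_one_add (hμ : μ (closedBall 0 1) = 1) {w : ℂ} (hw : ‖w‖ < p) :
    IntegrableOn (fun a => zpowValuation w (1 + a)) (closedBall 0 1) μ :=
  (integrableOn_closedBall_comp_add_left_iff (by simp)).2 (integrableOn_zpowValuation hμ hw)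

lemma integrableOn_zpowValuation_one_add_mul (hμ : μ (closedBall 0 1) = 1) {w₁ w₂ : ℂ}
    (hw₁ : ‖w₁‖ < p) (hw₂ : ‖w₂‖ < p) :
    IntegrableOn (fun a => zpowValuation w₁ (1 + a) * zpowValuation w₂ a) (closedBall 0 1) μ :=
  (((integrableOn_zpowValuation_one_add hμ hw₁).add (integrableOn_zpowValuation hμ hw₂)).sub
    (integrableOn_const (by simp [hμ]))).congr_fun
    (eqOn_zpowValuation_one_add_mul w₁ w₂).symm measurableSet_closedBall

lemma setIntegral_zpowValuation_one_add_mul (hμ : μ (closedBall 0 1) = 1) {w₁ w₂ : ℂ}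
    (hw₁ : ‖w₁‖ < p) (hw₂ : ‖w₂‖ < p) :
    ∫ a in closedBall 0 1, zpowValuation w₁ (1 + a) * zpowValuation w₂ a ∂μ =
      (1 - (p : ℂ)⁻¹) / (1 - (p : ℂ)⁻¹ * w₁) + (1 - (p : ℂ)⁻¹) / (1 - (p : ℂ)⁻¹ * w₂) - 1 := by
  have hi₁ := integrableOn_zpowValuation_one_add hμ hw₁
  have hi₂ := integrableOn_zpowValuation hμ hw₂
  have hi : IntegrableOn (fun a => zpowValuation w₁ (1 + a) + zpowValuation w₂ a)
      (closedBall 0 1) μ := hi₁.add hi₂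
  rw [setIntegral_congr_fun measurableSet_closedBall (eqOn_zpowValuation_one_add_mul w₁ w₂),
    integral_sub hi (integrableOn_const (by simp [hμ])), integral_add hi₁ hi₂,
    setIntegral_closedBall_comp_add_left (by simp), setIntegral_zpowValuation hμ hw₁,
    setIntegral_zpowValuation hμ hw₂, setIntegral_const, measureReal_def, hμ,
    ENNReal.toReal_one, one_smul]

end Measure

end Padic

open Padic

theorem stmt_3_general (p : ℕ) [Fact p.Prime]
    [MeasurableSpace ℚ_[p]] [BorelSpace ℚ_[p]]
    (μ : Measure ℚ_[p]) [μ.IsAddHaarMeasure]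
    (hμ : μ {x : ℚ_[p] | ‖x‖ ≤ 1} = 1)
    (z₁ z₂ : ℂ) (hz₁ : ‖z₁‖ = 1) (hz₂ : ‖z₂‖ = 1)
    (qih : ℂ) (hqih : qih ^ 2 = (p : ℂ)⁻¹) :
    MeasureTheory.IntegrableOn
      (fun a : ℚ_[p] =>
        if a = 0 ∨ a = -1 then (0 : ℂ)
        else z₁ ^ (1 + a).valuation * qih ^ (-(1 + a).valuation) *
          (z₂ ^ a.valuation * qih ^ (-a.valuation)))
      {x : ℚ_[p] | ‖x‖ ≤ 1} μ ∧
    (p : ℂ) * ∫ a in {x : ℚ_[p] | ‖x‖ ≤ 1},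
        (if a = 0 ∨ a = -1 then (0 : ℂ)
         else z₁ ^ (1 + a).valuation * qih ^ (-(1 + a).valuation) *
           (z₂ ^ a.valuation * qih ^ (-a.valuation))) ∂μ
      = (p : ℂ) - 2 + ((p : ℂ) - 1) * (qih * z₁ + qih * z₂ - 2 * (p : ℂ)⁻¹ * (z₁ * z₂)) /
          ((1 - qih * z₁) * (1 - qih * z₂)) := by
  have hball : {x : ℚ_[p] | ‖x‖ ≤ 1} = closedBall 0 1 := by ext; simp
  rw [hball] at hμ ⊢
  have hp0 : (p : ℂ) ≠ 0 := mod_cast (Fact.out : p.Prime).ne_zero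
  have hpq : (p : ℂ) * qih ^ 2 = 1 := by rw [hqih, mul_inv_cancel₀ hp0]
  have hqinv : qih⁻¹ = p * qih := inv_eq_of_mul_eq_one_right (by linear_combination hpq)
  have hq := Complex.norm_lt_one_of_sq_eq_inv_natCast (Fact.out : p.Prime).one_lt hqih
  have hw : ∀ z : ℂ, ‖z‖ = 1 → ‖(p : ℂ) * qih * z‖ < p := fun z hz => by
    rw [norm_mul, norm_mul, hz, mul_one, Complex.norm_natCast]
    exact mul_lt_of_lt_one_right (mod_cast (Fact.out : p.Prime).pos) hq
  have hF : ∀ a : ℚ_[p], (if a = 0 ∨ a = -1 then (0 : ℂ)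
        else z₁ ^ (1 + a).valuation * qih ^ (-(1 + a).valuation) *
          (z₂ ^ a.valuation * qih ^ (-a.valuation))) =
      zpowValuation (p * qih * z₁) (1 + a) * zpowValuation (p * qih * z₂) a := fun a => by
    simp only [zpowValuation, zpow_neg, ← inv_zpow, hqinv, ← mul_zpow, add_eq_zero_iff_neg_eq]
    split_ifs <;> simp_all [eq_comm, mul_comm]
  simp only [hF]
  refine ⟨integrableOn_zpowValuation_one_add_mul hμ (hw z₁ hz₁) (hw z₂ hz₂), ?_⟩
  have hden : ∀ z : ℂ, ‖z‖ = 1 → 1 - qih * z ≠ 0 := fun z hz => sub_ne_zero.2 fun h => by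
    simpa [hz, hq.ne'] using congrArg norm h
  have h₁ := hden z₁ hz₁
  have h₂ := hden z₂ hz₂
  rw [setIntegral_zpowValuation_one_add_mul hμ (hw z₁ hz₁) (hw z₂ hz₂)]
  simp only [mul_assoc, inv_mul_cancel_left₀ hp0]
  rw [← hqih]
  field_simp
  linear_combination (qih * z₁ + qih * z₂ - 2) * hpq

/-- Let `F = ℚ_p` (p odd) with Haar measure `μ` normalized by `μ(ℤ_p) = 1`, and let
`χᵢ` be unramified unitary characters of `F^×`, i.e. `χᵢ(x) = zᵢ^{v(x)}` with `|zᵢ| = 1`.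
Let `qih` be a fixed square root of `q⁻¹ = p⁻¹` (playing the role of `q^{-1/2}`), so that
`|x|^{-1/2} = qih^{-v(x)}`.  Then the integral
`q·∫_{ℤ_p} χ₁(1+a)|1+a|^{-1/2} χ₂(a)|a|^{-1/2} da` (integrand extended by `0` on the
measure-zero set `{0, -1}`) is absolutely convergent and equals
`q − 2 + (q−1)(q^{-1/2}z₁ + q^{-1/2}z₂ − 2q^{-1}z₁z₂)/((1 − q^{-1/2}z₁)(1 − q^{-1/2}z₂))`. -/
theorem stmt_3 (p : ℕ) [Fact p.Prime] (hodd : Odd p)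
    [MeasurableSpace ℚ_[p]] [BorelSpace ℚ_[p]]
    (μ : Measure ℚ_[p]) [μ.IsAddHaarMeasure]
    (hμ : μ {x : ℚ_[p] | ‖x‖ ≤ 1} = 1)
    (z₁ z₂ : ℂ) (hz₁ : ‖z₁‖ = 1) (hz₂ : ‖z₂‖ = 1)
    (qih : ℂ) (hqih : qih ^ 2 = (p : ℂ)⁻¹) :
    MeasureTheory.IntegrableOn
      (fun a : ℚ_[p] =>
        if a = 0 ∨ a = -1 then (0 : ℂ)
        else z₁ ^ (1 + a).valuation * qih ^ (-(1 + a).valuation) *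
          (z₂ ^ a.valuation * qih ^ (-a.valuation)))
      {x : ℚ_[p] | ‖x‖ ≤ 1} μ ∧
    (p : ℂ) * ∫ a in {x : ℚ_[p] | ‖x‖ ≤ 1},
        (if a = 0 ∨ a = -1 then (0 : ℂ)
         else z₁ ^ (1 + a).valuation * qih ^ (-(1 + a).valuation) *
           (z₂ ^ a.valuation * qih ^ (-a.valuation))) ∂μ
      = (p : ℂ) - 2 + ((p : ℂ) - 1) * (qih * z₁ + qih * z₂ - 2 * (p : ℂ)⁻¹ * (z₁ * z₂)) /
          ((1 - qih * z₁) * (1 - qih * z₂)) :=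
  stmt_3_general p μ hμ z₁ z₂ hz₁ hz₂ qih hqih
end

section
/- Let F be a field and x ∈ F with x ≠ −1. Let η ∈ GL₄(F) be the matrix with rows (1,0,0,0), (0,1,0,0), (0,−1,1,0), (−1,1,−1,1), and let x_{−α₁}(x) ∈ GL₄(F) be the identity matrix with (2,1)-entry replaced by x. Then (x_{−α₁}(x)·η, I₂) = (b, h^{-1}) · (η, I₂) · (g, h) in GL₄(F) × GL₂(F), where g = diag-block matrix with rows (1,0,0,0), (x/(x+1), 1/(x+1), 0, 0), (0,0,1/(x+1), x/(x+1)), (0,0,0,1); h = [[1/(x+1), x/(x+1)],[0,1]]; b = the upper-triangular matrix with rows (1,0,0,0),(0,x+1,0,0),(0,0,1,−x),(0,0,0,x+1); and (g, h) ∈ H means g = diag(a, b₀) with a = the upper-left 2×2 block, b₀ = h viewed via the embedding H = GL₂×GL₂ ↪ GL₄×GL₂, (a,b₀) ↦ (diag(a,b₀), b₀). -/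
lemma Matrix.isUnit_det_fin_two_of_upper {F : Type*} [Field F] {a d : F} (b : F)
    (ha : a ≠ 0) (hd : d ≠ 0) : IsUnit !![a, b; 0, d].det :=
  isUnit_iff_ne_zero.mpr (by simp [Matrix.det_fin_two_of, ha, hd])

lemma lowerRootElt_mul_eta_eq_borel_mul_eta_mul {F : Type*} [Field F] (x : F)
    (hx : x + 1 ≠ 0) :
    (!![1, 0, 0, 0; x, 1, 0, 0; 0, 0, 1, 0; 0, 0, 0, 1] *
        !![1, 0, 0, 0; 0, 1, 0, 0; 0, -1, 1, 0; -1, 1, -1, 1] : Matrix (Fin 4) (Fin 4) F)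
      = !![1, 0, 0, 0; 0, x + 1, 0, 0; 0, 0, 1, -x; 0, 0, 0, x + 1] *
        !![1, 0, 0, 0; 0, 1, 0, 0; 0, -1, 1, 0; -1, 1, -1, 1] *
        !![1, 0, 0, 0; x / (x + 1), 1 / (x + 1), 0, 0;
            0, 0, 1 / (x + 1), x / (x + 1); 0, 0, 0, 1] := by
  ext i j
  fin_cases i <;> fin_cases j <;> simp [Matrix.mul_apply, Fin.sum_univ_four] <;>
    field_simp <;> ring

/-- For the model `(GL₄ × GL₂, GL₂ × GL₂)` with `H = GL₂ × GL₂` embedded by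
`(a, b) ↦ (diag(a, b), b)`: for `x ≠ −1` one has the factorization
`(x_{−α₁}(x)·η, I₂) = (b, h⁻¹) · (η, I₂) · (g, h)` in `GL₄(F) × GL₂(F)`, where
`η, x_{−α₁}(x), g, h, b` are the displayed matrices, and `(g, h)` lies in (the image of)
`H`, i.e. `g = diag(A, h)` with `A` its upper-left `2×2` block. -/
theorem stmt_8 {F : Type*} [Field F] (x : F) (hx : x ≠ -1) :
    ((!![1, 0, 0, 0; x, 1, 0, 0; 0, 0, 1, 0; 0, 0, 0, 1] *
        !![1, 0, 0, 0; 0, 1, 0, 0; 0, -1, 1, 0; -1, 1, -1, 1],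
      (1 : Matrix (Fin 2) (Fin 2) F))
      = ((!![1, 0, 0, 0; 0, x + 1, 0, 0; 0, 0, 1, -x; 0, 0, 0, x + 1] :
            Matrix (Fin 4) (Fin 4) F),
          (!![1 / (x + 1), x / (x + 1); 0, 1] : Matrix (Fin 2) (Fin 2) F)⁻¹) *
        (!![1, 0, 0, 0; 0, 1, 0, 0; 0, -1, 1, 0; -1, 1, -1, 1], 1) *
        (!![1, 0, 0, 0; x / (x + 1), 1 / (x + 1), 0, 0;
            0, 0, 1 / (x + 1), x / (x + 1); 0, 0, 0, 1],
          !![1 / (x + 1), x / (x + 1); 0, 1])) ∧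
    -- `(g, h)` lies in `H = GL₂ × GL₂ ↪ GL₄ × GL₂`, `(a,b) ↦ (diag(a,b), b)`:
    (!![1, 0, 0, 0; x / (x + 1), 1 / (x + 1), 0, 0;
        0, 0, 1 / (x + 1), x / (x + 1); 0, 0, 0, 1] : Matrix (Fin 4) (Fin 4) F)
      = !![1, 0, 0, 0;
           x / (x + 1), 1 / (x + 1), 0, 0;
           0, 0, (!![1 / (x + 1), x / (x + 1); 0, 1] : Matrix (Fin 2) (Fin 2) F) 0 0,
                 (!![1 / (x + 1), x / (x + 1); 0, 1] : Matrix (Fin 2) (Fin 2) F) 0 1;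
           0, 0, (!![1 / (x + 1), x / (x + 1); 0, 1] : Matrix (Fin 2) (Fin 2) F) 1 0,
                 (!![1 / (x + 1), x / (x + 1); 0, 1] : Matrix (Fin 2) (Fin 2) F) 1 1] := by
  have hx₁ : x + 1 ≠ 0 := fun h ↦ hx (eq_neg_of_add_eq_zero_left h)
  have hdet := Matrix.isUnit_det_fin_two_of_upper (x / (x + 1))
    (one_div_ne_zero hx₁) one_ne_zero
  refine ⟨?_, rfl⟩
  -- the `GL₂` component is `h⁻¹ · 1 · h = 1`, so `h⁻¹` never has to be computed
  rw [Prod.mk_mul_mk, Prod.mk_mul_mk, mul_one, Matrix.nonsing_inv_mul _ hdet]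
  exact Prod.ext (lowerRootElt_mul_eta_eq_borel_mul_eta_mul x hx₁) rfl
end

section
/- Let q be an indeterminate and let θ₁,…,θ₆ be indeterminates (work in the field of rational functions in q^{1/2}, θ₁,…,θ₆). Let Θ⁺ be the 10-element family of triples {1,2,i} (3≤i≤6), {1,3,j} (4≤j≤6), {1,4,5}, {2,3,4}, {2,3,5}. Then, as an identity of rational functions subject to the relation θ₁θ₂θ₃θ₄θ₅θ₆ = 1, one has: Σ_{s ∈ S₆} [ ∏_{{i,j,k} ∈ Θ⁺} (1 − q^{-1/2} θ_{s(i)} θ_{s(j)} θ_{s(k)}) ] / [ ∏_{1 ≤ i < j ≤ 6} (1 − θ_{s(i)}/θ_{s(j)}) ] = 1 − q^{-2}. -/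
set_option maxRecDepth 100000

namespace GRaux

def T6 : Finset (Fin 6 × Fin 6 × Fin 6) :=
  {(0, 1, 2), (0, 1, 3), (0, 1, 4), (0, 1, 5), (0, 2, 3), (0, 2, 4),
   (0, 2, 5), (0, 3, 4), (1, 2, 3), (1, 2, 4)}

def cnt (w : Fin 6 × Fin 6 × Fin 6) (j : Fin 6) : ℕ :=
  (if j = w.1 then 1 else 0) + (if j = w.2.1 then 1 else 0) + (if j = w.2.2 then 1 else 0)

def eA (A : Finset (Fin 6 × Fin 6 × Fin 6)) : Fin 6 → ℕ :=
  fun j => (j : ℕ) + ∑ w ∈ A, cnt w j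


def pairs : Finset (Fin 6 × Fin 6) := Finset.univ.filter (fun p => p.1 < p.2)

variable {K : Type*} [Field K]

def Mat (θ : Fin 6 → K) (e : Fin 6 → ℕ) : Matrix (Fin 6) (Fin 6) K :=
  Matrix.of fun p i => θ i ^ e p

/-- Leibniz formula specialized. -/
theorem L1 (θ : Fin 6 → K) (e : Fin 6 → ℕ) :
    ∑ s : Equiv.Perm (Fin 6), ((Equiv.Perm.sign s : ℤ) : K) * ∏ j, θ (s j) ^ e j
      = (Mat θ e).det := by
  rw [Matrix.det_apply]
  refine Fintype.sum_equiv (Equiv.inv (Equiv.Perm (Fin 6))) _ _ fun s => ?_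
  have h1 : ∏ i, Mat θ e ((s⁻¹ : Equiv.Perm (Fin 6)) i) i = ∏ j, θ (s j) ^ e j := by
    rw [← Equiv.prod_comp s fun i => Mat θ e ((s⁻¹ : Equiv.Perm (Fin 6)) i) i]
    refine Finset.prod_congr rfl fun j _ => ?_
    simp [Mat]
  simp only [Equiv.inv_apply, Equiv.Perm.sign_inv, h1, Units.smul_def, zsmul_eq_mul]


theorem Lw (w : Fin 6 × Fin 6 × Fin 6) (hw : w ∈ T6) (f : Fin 6 → K) :
    (∏ j, f j ^ cnt w j) = f w.1 * f w.2.1 * f w.2.2 := by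
  fin_cases hw <;> simp [cnt, Fin.prod_univ_six]

theorem regroup (θ : Fin 6 → K) (s : Equiv.Perm (Fin 6))
    {A : Finset (Fin 6 × Fin 6 × Fin 6)} (hA : A ⊆ T6) :
    (∏ j, θ (s j) ^ (j : ℕ)) * ∏ w ∈ A, (θ (s w.1) * θ (s w.2.1) * θ (s w.2.2))
      = ∏ j, θ (s j) ^ (eA A j) := by
  have h1 : ∀ j : Fin 6, θ (s j) ^ (eA A j)
      = θ (s j) ^ (j : ℕ) * ∏ w ∈ A, θ (s j) ^ cnt w j := by
    intro j
    rw [eA, pow_add, Finset.prod_pow_eq_pow_sum]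
  simp_rw [h1]
  conv_rhs => rw [Finset.prod_mul_distrib]
  congr 1
  rw [Finset.prod_comm]
  exact (Finset.prod_congr rfl fun w hw => Lw w (hA hw) (fun j => θ (s j))).symm

theorem PP1 (g : Fin 6 × Fin 6 → K) :
    ∏ p ∈ pairs, g p = ∏ i, ∏ j ∈ Finset.Ioi i, g (i, j) := by
  rw [pairs, Finset.prod_filter, ← Finset.univ_product_univ, Finset.prod_product]
  refine Finset.prod_congr rfl fun i _ => ?_
  rw [← Finset.prod_filter]
  refine Finset.prod_congr ?_ fun _ _ => rfl
  ext j; simp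

theorem PP2 (f : Fin 6 → K) :
    ∏ p ∈ pairs, f p.2 = ∏ j, f j ^ (j : ℕ) := by
  have hcard : ∀ j : Fin 6, (Finset.univ.filter fun i : Fin 6 => i < j).card = (j : ℕ) := by
    decide
  rw [pairs, Finset.prod_filter, ← Finset.univ_product_univ, Finset.prod_product_right]
  refine Finset.prod_congr rfl fun j _ => ?_
  rw [← Finset.prod_filter]
  calc ∏ a ∈ Finset.univ.filter (fun a => (a, j).1 < (a, j).2), f (a, j).2
      = ∏ _a ∈ Finset.univ.filter (fun a : Fin 6 => a < j), f j :=
        Finset.prod_congr (by ext a; simp) (fun _ _ => rfl)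
    _ = f j ^ (j : ℕ) := by rw [Finset.prod_const, hcard]

theorem van (θ : Fin 6 → K) (s : Equiv.Perm (Fin 6)) :
    ∏ p ∈ pairs, (θ (s p.2) - θ (s p.1))
      = ((Equiv.Perm.sign s : ℤ) : K) * ∏ p ∈ pairs, (θ p.2 - θ p.1) := by
  rw [PP1, PP1 (fun p => θ p.2 - θ p.1)]
  have h1 : (∏ i, ∏ j ∈ Finset.Ioi i, (θ (s j) - θ (s i)))
      = (Matrix.vandermonde (fun i => θ (s i))).det := (Matrix.det_vandermonde _).symm
  have h2 : Matrix.vandermonde (fun i => θ (s i))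
      = (Matrix.vandermonde θ).submatrix s id := rfl
  rw [h1, h2, Matrix.det_permute, Matrix.det_vandermonde]


theorem den (θ : Fin 6 → K) (h0 : ∀ i, θ i ≠ 0) (s : Equiv.Perm (Fin 6)) :
    ∏ p ∈ pairs, (1 - θ (s p.1) / θ (s p.2))
      = (((Equiv.Perm.sign s : ℤ) : K) * ∏ p ∈ pairs, (θ p.2 - θ p.1))
          / ∏ j, θ (s j) ^ (j : ℕ) := by
  have h1 : ∀ p ∈ pairs, 1 - θ (s p.1) / θ (s p.2)
      = (θ (s p.2) - θ (s p.1)) / θ (s p.2) := by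
    intro p _
    rw [eq_div_iff (h0 _), sub_mul, one_mul, div_mul_cancel₀ _ (h0 _)]
  rw [Finset.prod_congr rfl h1, Finset.prod_div_distrib, van, PP2 (fun j => θ (s j))]

theorem Lswap (θ : Fin 6 → K) (e : Fin 6 → ℕ) {p q : Fin 6} (hpq : p ≠ q) :
    (Mat θ (e ∘ ⇑(Equiv.swap p q))).det = -(Mat θ e).det := by
  have h : Mat θ (e ∘ ⇑(Equiv.swap p q)) = (Mat θ e).submatrix (Equiv.swap p q) id := rfl
  rw [h, Matrix.det_permute, Equiv.Perm.sign_swap hpq]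
  push_cast
  ring

theorem hd0 (θ : Fin 6 → K) :
    (Mat θ (fun j => (j : ℕ))).det = ∏ p ∈ pairs, (θ p.2 - θ p.1) := by
  have hM : Mat θ (fun j => (j : ℕ)) = (Matrix.vandermonde θ).transpose := rfl
  rw [hM, Matrix.det_transpose, Matrix.det_vandermonde,
    PP1 (fun p : Fin 6 × Fin 6 => θ p.2 - θ p.1)]

theorem hd2 (θ : Fin 6 → K) :
    (Mat θ (fun j => (j : ℕ) + 2)).det
      = (∏ i, θ i) ^ 2 * ∏ p ∈ pairs, (θ p.2 - θ p.1) := by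
  have hM : Mat θ (fun j => (j : ℕ) + 2)
      = Matrix.of (fun p i => (fun i : Fin 6 => θ i ^ 2) i
          * Mat θ (fun j => (j : ℕ)) p i) := by
    ext p i
    show θ i ^ ((p : ℕ) + 2) = θ i ^ 2 * θ i ^ (p : ℕ)
    rw [pow_add]; ring

  rw [hM, Matrix.det_mul_row, hd0, ← Finset.prod_pow]

def A96 : Finset (Fin 6 × Fin 6 × Fin 6) := {(0,2,4), (0,2,5)}
def A160 : Finset (Fin 6 × Fin 6 × Fin 6) := {(0,2,4), (0,3,4)}
def A192 : Finset (Fin 6 × Fin 6 × Fin 6) := {(0,2,5), (0,3,4)}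
def A544 : Finset (Fin 6 × Fin 6 × Fin 6) := {(0,2,4), (1,2,4)}
def A576 : Finset (Fin 6 × Fin 6 × Fin 6) := {(0,2,5), (1,2,4)}
def A640 : Finset (Fin 6 × Fin 6 × Fin 6) := {(0,3,4), (1,2,4)}
def A736 : Finset (Fin 6 × Fin 6 × Fin 6) := {(0,2,4), (0,2,5), (0,3,4), (1,2,4)}

def S8 : Finset (Finset (Fin 6 × Fin 6 × Fin 6)) :=
  {∅, A96, A160, A192, A544, A576, A640, A736}

set_option maxHeartbeats 12000000 in
theorem hzero_filter : T6.powerset.filter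
    (fun A => ¬(A ∈ S8 ∨ ∃ p q : Fin 6, p ≠ q ∧ eA A p = eA A q)) = ∅ := by decide

theorem key (t : K) (θ : Fin 6 → K) :
    ∑ s : Equiv.Perm (Fin 6), ((Equiv.Perm.sign s : ℤ) : K) *
      ((∏ j, θ (s j) ^ (j : ℕ)) *
        ∏ w ∈ T6, (1 - t * (θ (s w.1) * θ (s w.2.1) * θ (s w.2.2))))
    = (1 - t ^ 4 * (∏ i, θ i) ^ 2) * ∏ p ∈ pairs, (θ p.2 - θ p.1) := by
  have expand : ∀ s : Equiv.Perm (Fin 6),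
      ∏ w ∈ T6, (1 - t * (θ (s w.1) * θ (s w.2.1) * θ (s w.2.2)))
        = ∑ A ∈ T6.powerset, (-t) ^ A.card
            * ∏ w ∈ A, (θ (s w.1) * θ (s w.2.1) * θ (s w.2.2)) := by
    intro s
    have h0 : ∀ w ∈ T6, (1 - t * (θ (s w.1) * θ (s w.2.1) * θ (s w.2.2)))
        = (-(t * (θ (s w.1) * θ (s w.2.1) * θ (s w.2.2))) + 1) := fun w _ => by ring
    rw [Finset.prod_congr rfl h0, Finset.prod_add]
    refine Finset.sum_congr rfl fun A hA => ?_
    rw [Finset.prod_const_one, mul_one]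
    have h2 : ∀ w ∈ A, -(t * (θ (s w.1) * θ (s w.2.1) * θ (s w.2.2)))
        = (-t) * (θ (s w.1) * θ (s w.2.1) * θ (s w.2.2)) := fun w _ => by ring
    rw [Finset.prod_congr rfl h2, Finset.prod_mul_distrib, Finset.prod_const]
  simp_rw [expand, Finset.mul_sum]
  rw [Finset.sum_comm]
  have inner1 : ∀ A ∈ T6.powerset,
      (∑ s : Equiv.Perm (Fin 6), ((Equiv.Perm.sign s : ℤ) : K) *
        ((∏ j, θ (s j) ^ (j : ℕ)) *
          ((-t) ^ A.card * ∏ w ∈ A, (θ (s w.1) * θ (s w.2.1) * θ (s w.2.2)))))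
      = (-t) ^ A.card * (Mat θ (eA A)).det := by
    intro A hA
    have hsub : A ⊆ T6 := Finset.mem_powerset.mp hA
    have step1 : ∀ s : Equiv.Perm (Fin 6),
        ((Equiv.Perm.sign s : ℤ) : K) *
          ((∏ j, θ (s j) ^ (j : ℕ)) *
            ((-t) ^ A.card * ∏ w ∈ A, (θ (s w.1) * θ (s w.2.1) * θ (s w.2.2))))
        = (-t) ^ A.card *
            (((Equiv.Perm.sign s : ℤ) : K) * ∏ j, θ (s j) ^ (eA A j)) := by
      intro s
      rw [← regroup θ s hsub]
      ring
    rw [Finset.sum_congr rfl fun s _ => step1 s, ← Finset.mul_sum, L1]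
  rw [Finset.sum_congr rfl inner1]
  have hS8sub : S8 ⊆ T6.powerset := by decide
  have hzero : ∀ A ∈ T6.powerset, A ∉ S8 → ∃ p q : Fin 6, p ≠ q ∧ eA A p = eA A q := by
    intro A hA hnA
    have h := Finset.filter_eq_empty_iff.mp hzero_filter hA
    rcases not_not.mp h with h1 | h2
    · exact absurd h1 hnA
    · exact h2
  rw [← Finset.sum_subset hS8sub (fun A hA hnA => ?_)]
  swap
  · obtain ⟨p, q, hpq, heq⟩ := hzero A hA hnA
    have hdet : (Mat θ (eA A)).det = 0 :=
      Matrix.det_zero_of_row_eq hpq (funext fun i => by simp [Mat, heq])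
    rw [hdet, mul_zero]
  rw [show S8 = insert ∅ {A96, A160, A192, A544, A576, A640, A736} from rfl]
  rw [Finset.sum_insert (by decide), Finset.sum_insert (by decide),
    Finset.sum_insert (by decide), Finset.sum_insert (by decide),
    Finset.sum_insert (by decide), Finset.sum_insert (by decide),
    Finset.sum_insert (by decide), Finset.sum_singleton]
  have he0 : eA ∅ = (fun j : Fin 6 => (j : ℕ)) := by funext j; fin_cases j <;> rfl
  have hc0 : (∅ : Finset (Fin 6 × Fin 6 × Fin 6)).card = 0 := rfl
  have hc96 : A96.card = 2 := by decide
  have hc160 : A160.card = 2 := by decide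
  have hc192 : A192.card = 2 := by decide
  have hc544 : A544.card = 2 := by decide
  have hc576 : A576.card = 2 := by decide
  have hc640 : A640.card = 2 := by decide
  have hc736 : A736.card = 4 := by decide
  have hs192 : eA A192 = eA A96 ∘ ⇑(Equiv.swap (2 : Fin 6) 3) := by
    funext j; fin_cases j <;> rfl
  have hs640 : eA A640 = eA A160 ∘ ⇑(Equiv.swap (0 : Fin 6) 1) := by
    funext j; fin_cases j <;> rfl
  have hs576 : eA A576 = eA A544 ∘ ⇑(Equiv.swap (4 : Fin 6) 5) := by
    funext j; fin_cases j <;> rfl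
  have hd192 : (Mat θ (eA A192)).det = -(Mat θ (eA A96)).det := by
    rw [hs192]; exact Lswap θ _ (by decide)
  have hd640 : (Mat θ (eA A640)).det = -(Mat θ (eA A160)).det := by
    rw [hs640]; exact Lswap θ _ (by decide)
  have hd576 : (Mat θ (eA A576)).det = -(Mat θ (eA A544)).det := by
    rw [hs576]; exact Lswap θ _ (by decide)
  have hs736 : eA A736 = (((fun j : Fin 6 => (j : ℕ) + 2) ∘ ⇑(Equiv.swap (4 : Fin 6) 5))
      ∘ ⇑(Equiv.swap (2 : Fin 6) 3)) ∘ ⇑(Equiv.swap (0 : Fin 6) 1) := by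
    funext j; fin_cases j <;> rfl
  have hd736 : (Mat θ (eA A736)).det
      = -((∏ i, θ i) ^ 2 * ∏ p ∈ pairs, (θ p.2 - θ p.1)) := by
    rw [hs736, Lswap θ _ (by decide), Lswap θ _ (by decide), Lswap θ _ (by decide), hd2]
    ring
  rw [he0, hc0, hc96, hc160, hc192, hc544, hc576, hc640, hc736,
    hd192, hd640, hd576, hd736, hd0]
  ring

end GRaux

/-- The Whittaker–Shintani constant identity for the Ginzburg–Rallis model
`(GL₆, GL₂⋉U)`: for any field `K`, `t` playing the role of `q^{-1/2}`, and nonzero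
pairwise distinct `θ₁,…,θ₆` with `θ₁⋯θ₆ = 1` (so the relevant denominators are nonzero;
this is the specialization form of the identity of rational functions subject to
`∏θᵢ = 1`), one has
`Σ_{s ∈ S₆} ∏_{{i,j,k} ∈ Θ⁺}(1 − q^{-1/2}θ_{s(i)}θ_{s(j)}θ_{s(k)}) /
  ∏_{i<j}(1 − θ_{s(i)}/θ_{s(j)}) = 1 − q^{-2}`,
where `Θ⁺` is the 10-element family (0-based indices below). -/
theorem stmt_11 {K : Type*} [Field K] (t : K) (θ : Fin 6 → K)
    (h0 : ∀ i, θ i ≠ 0) (hd : ∀ i j, i ≠ j → θ i ≠ θ j)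
    (hprod : ∏ i, θ i = 1) :
    ∑ s : Equiv.Perm (Fin 6),
      (∏ w ∈ ({(0, 1, 2), (0, 1, 3), (0, 1, 4), (0, 1, 5), (0, 2, 3), (0, 2, 4),
                (0, 2, 5), (0, 3, 4), (1, 2, 3), (1, 2, 4)} :
              Finset (Fin 6 × Fin 6 × Fin 6)),
          (1 - t * (θ (s w.1) * θ (s w.2.1) * θ (s w.2.2)))) /
      (∏ p ∈ Finset.univ.filter (fun p : Fin 6 × Fin 6 => p.1 < p.2),
          (1 - θ (s p.1) / θ (s p.2)))
    = 1 - t ^ 4 := by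
  have hT : ({(0, 1, 2), (0, 1, 3), (0, 1, 4), (0, 1, 5), (0, 2, 3), (0, 2, 4),
                (0, 2, 5), (0, 3, 4), (1, 2, 3), (1, 2, 4)} :
              Finset (Fin 6 × Fin 6 × Fin 6)) = GRaux.T6 := rfl
  have hP : Finset.univ.filter (fun p : Fin 6 × Fin 6 => p.1 < p.2) = GRaux.pairs := rfl
  rw [hT, hP]
  have hV : (∏ p ∈ GRaux.pairs, (θ p.2 - θ p.1)) ≠ 0 := by
    rw [Finset.prod_ne_zero_iff]
    intro p hp
    have hlt : p.1 < p.2 := (Finset.mem_filter.mp hp).2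
    exact sub_ne_zero_of_ne (hd p.2 p.1 (ne_of_gt hlt))
  have hstep : ∀ s ∈ (Finset.univ : Finset (Equiv.Perm (Fin 6))),
      (∏ w ∈ GRaux.T6, (1 - t * (θ (s w.1) * θ (s w.2.1) * θ (s w.2.2)))) /
        (∏ p ∈ GRaux.pairs, (1 - θ (s p.1) / θ (s p.2)))
      = (((Equiv.Perm.sign s : ℤ) : K) *
          ((∏ j, θ (s j) ^ (j : ℕ)) *
            ∏ w ∈ GRaux.T6, (1 - t * (θ (s w.1) * θ (s w.2.1) * θ (s w.2.2))))) /
          (∏ p ∈ GRaux.pairs, (θ p.2 - θ p.1)) := by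
    intro s _
    rw [GRaux.den θ h0 s, div_div_eq_mul_div]
    rcases Int.units_eq_one_or (Equiv.Perm.sign s) with hs | hs <;> rw [hs]
    · push_cast
      rw [one_mul, one_mul]
      ring
    · push_cast
      rw [neg_one_mul, div_neg]
      ring
  rw [Finset.sum_congr rfl hstep, ← Finset.sum_div, GRaux.key t θ, hprod]
  rw [one_pow, mul_one, mul_div_cancel_right₀ _ hV]
end

section
/- Let q^{1/2}, θ₁, θ₂, θ₃, θ₄, θ₅, θ₆ be indeterminates. Then, as an identity of rational functions: Σ over the 6 cosets s ∈ S₄/(S₂×S₂) (where S₄ permutes {1,2,3,4} and S₂×S₂ is generated by the transpositions (12) and (34)) of (1 − q^{-1/2} θ_{s(1)}θ_{s(2)}θ₅)(1 − q^{-1/2} θ_{s(1)}θ_{s(2)}θ₆) / ∏_{1≤i≤2, 3≤j≤4} (1 − θ_{s(i)}/θ_{s(j)}) = 1. (The summand depends only on the coset since it is invariant under the S₂×S₂ action.) -/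
set_option maxHeartbeats 1000000 in
theorem term_eq' {K : Type*} [Field K] (N a b c d : K) (hc : c ≠ 0) (hd : d ≠ 0) :
    N / ((1 - a/c)*(1 - a/d) * ((1 - b/c)*(1 - b/d)))
      = N * (c^2*d^2) / ((c-a)*((d-a)*((c-b)*(d-b)))) := by
  have e : (1 - a/c)*(1 - a/d) * ((1 - b/c)*(1 - b/d))
      = ((c-a)*((d-a)*((c-b)*(d-b)))) / (c^2*d^2) := by
    field_simp
  rw [e, div_div_eq_mul_div]

theorem six_comb {K : Type*} [Field K] (A B C D E F E1 E2 E3 : K)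
    (h1 : E1 ≠ 0) (h2 : E2 ≠ 0) (h3 : E3 ≠ 0)
    (h : (A+F)*(E2*E3) + (B+E)*(E1*E3) + (C+D)*(E1*E2) = E1*(E2*E3)) :
    A/E1 + (B/E2 + (C/E3 + (D/E3 + (E/E2 + F/E1)))) = 1 := by
  have e1 : A/E1 + (B/E2 + (C/E3 + (D/E3 + (E/E2 + F/E1))))
      = (A+F)/E1 + ((B+E)/E2 + (C+D)/E3) := by ring
  rw [e1, div_add_div _ _ h2 h3, div_add_div _ _ h1 (mul_ne_zero h2 h3),
    div_eq_one_iff_eq (mul_ne_zero h1 (mul_ne_zero h2 h3))]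
  linear_combination h

set_option maxHeartbeats 4000000 in
/-- The reduction identity for the Ginzburg–Rallis model: for a field `K`, `t` playing
the role of `q^{-1/2}`, variables `θ₁,…,θ₄` (nonzero and pairwise distinct, so that the
denominators are nonzero) and `θ₅ = u`, `θ₆ = v`, the sum over the 6 two-element subsets
`P ⊂ {1,2,3,4}` (i.e. over the cosets `S₄/(S₂×S₂)`) of
`(1 − q^{-1/2}(∏_{i∈P}θᵢ)θ₅)(1 − q^{-1/2}(∏_{i∈P}θᵢ)θ₆) / ∏_{i∈P, j∉P}(1 − θᵢ/θⱼ)`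
equals `1`. -/
theorem stmt_12 {K : Type*} [Field K] (t u v : K) (θ : Fin 4 → K)
    (h0 : ∀ i, θ i ≠ 0) (hd : ∀ i j, i ≠ j → θ i ≠ θ j) :
    ∑ P ∈ Finset.univ.filter (fun P : Finset (Fin 4) => P.card = 2),
      ((1 - t * (∏ i ∈ P, θ i) * u) * (1 - t * (∏ i ∈ P, θ i) * v)) /
        (∏ i ∈ P, ∏ j ∈ Pᶜ, (1 - θ i / θ j))
    = 1 := by
  have h : Finset.univ.filter (fun P : Finset (Fin 4) => P.card = 2) =
    {({0,1} : Finset (Fin 4)), {0,2}, {0,3}, {1,2}, {1,3}, {2,3}} := by decide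
  rw [h]
  have c1 : ({0,1} : Finset (Fin 4))ᶜ = {2,3} := by decide
  have c2 : ({0,2} : Finset (Fin 4))ᶜ = {1,3} := by decide
  have c3 : ({0,3} : Finset (Fin 4))ᶜ = {1,2} := by decide
  have c4 : ({1,2} : Finset (Fin 4))ᶜ = {0,3} := by decide
  have c5 : ({1,3} : Finset (Fin 4))ᶜ = {0,2} := by decide
  have c6 : ({2,3} : Finset (Fin 4))ᶜ = {0,1} := by decide
  rw [Finset.sum_insert (by decide), Finset.sum_insert (by decide),
    Finset.sum_insert (by decide), Finset.sum_insert (by decide),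
    Finset.sum_insert (by decide), Finset.sum_singleton, c1, c2, c3, c4, c5, c6]
  simp only [Finset.prod_pair (by decide : (0:Fin 4) ≠ 1),
    Finset.prod_pair (by decide : (0:Fin 4) ≠ 2), Finset.prod_pair (by decide : (0:Fin 4) ≠ 3),
    Finset.prod_pair (by decide : (1:Fin 4) ≠ 2), Finset.prod_pair (by decide : (1:Fin 4) ≠ 3),
    Finset.prod_pair (by decide : (2:Fin 4) ≠ 3)]
  have h00 := h0 0; have h01 := h0 1; have h02 := h0 2; have h03 := h0 3
  rw [term_eq' _ _ _ _ _ h02 h03, term_eq' _ _ _ _ _ h01 h03,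
    term_eq' _ _ _ _ _ h01 h02, term_eq' _ _ _ _ _ h00 h03,
    term_eq' _ _ _ _ _ h00 h02, term_eq' _ _ _ _ _ h00 h01]
  -- match opposite-coset denominators
  have r3 : (θ 0 - θ 2)*((θ 1 - θ 2)*((θ 0 - θ 3)*(θ 1 - θ 3)))
      = (θ 2 - θ 0)*((θ 3 - θ 0)*((θ 2 - θ 1)*(θ 3 - θ 1))) := by ring
  have r2 : (θ 0 - θ 1)*((θ 2 - θ 1)*((θ 0 - θ 3)*(θ 2 - θ 3)))
      = (θ 1 - θ 0)*((θ 3 - θ 0)*((θ 1 - θ 2)*(θ 3 - θ 2))) := by ring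
  have r1 : (θ 0 - θ 1)*((θ 3 - θ 1)*((θ 0 - θ 2)*(θ 3 - θ 2)))
      = (θ 1 - θ 0)*((θ 2 - θ 0)*((θ 1 - θ 3)*(θ 2 - θ 3))) := by ring
  rw [r1, r2, r3]
  have s : ∀ i j : Fin 4, i ≠ j → θ i - θ j ≠ 0 := fun i j hij => sub_ne_zero.mpr (hd i j hij)
  apply six_comb
  · exact mul_ne_zero (s 2 0 (by decide)) (mul_ne_zero (s 3 0 (by decide))
      (mul_ne_zero (s 2 1 (by decide)) (s 3 1 (by decide))))
  · exact mul_ne_zero (s 1 0 (by decide)) (mul_ne_zero (s 3 0 (by decide))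
      (mul_ne_zero (s 1 2 (by decide)) (s 3 2 (by decide))))
  · exact mul_ne_zero (s 1 0 (by decide)) (mul_ne_zero (s 2 0 (by decide))
      (mul_ne_zero (s 1 3 (by decide)) (s 2 3 (by decide))))
  · ring
end

section
/- Let q > 1 be a real number. Set θ₁ = q^{3/2}, θ₂ = q^{1/2}, θ₃ = q^{-1/2}, θ₄ = q^{-3/2} and θ₁′ = q^{1/2}, θ₂′ = q^{-1/2}. Suppose (s, s′) ∈ S₄ × S₂ is a pair of permutations such that none of the following numbers equals q^{1/2}: θ_{s(i)} for 1 ≤ i ≤ 4; θ_{s(1)}θ_{s(j)}θ′_{s′(k)} for j ∈ {2,3}, k ∈ {1,2}; θ_{s(1)}θ_{s(4)}θ′_{s′(1)}; and θ_{s(2)}θ_{s(3)}θ′_{s′(1)}. Then s is the permutation i ↦ 5−i and s′ is the transposition (the longest elements of S₄ and S₂). -/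
private def F : Fin 4 → ℤ := ![3, 1, -1, -3]
private def G : Fin 2 → ℤ := ![1, -1]

set_option synthInstance.maxHeartbeats 1000000 in
set_option synthInstance.maxSize 1024 in
set_option maxHeartbeats 2000000 in
private lemma key : ∀ (s : Equiv.Perm (Fin 4)) (s' : Equiv.Perm (Fin 2)),
    F (s 0) ≠ 1 → F (s 1) ≠ 1 → -F (s 2) ≠ 1 → -F (s 3) ≠ 1 →
    (∀ j ∈ ({1, 2} : Finset (Fin 4)), ∀ k : Fin 2, F (s 0) + F (s j) + G (s' k) ≠ 1) →
    F (s 0) + F (s 3) + G (s' 0) ≠ 1 →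
    F (s 1) + F (s 2) + G (s' 0) ≠ 1 →
    (∀ i, s i = i.rev) ∧ (∀ k, s' k = k.rev) := by decide

/-- The vanishing claim for the model `(GL₄×GL₂, GL₂×GL₂)` at `θ = δ_B^{1/2}`: with
`q > 1`, `r = q^{1/2}`, `θ = (q^{3/2}, q^{1/2}, q^{-1/2}, q^{-3/2})`,
`θ′ = (q^{1/2}, q^{-1/2})`, if `(s, s′) ∈ S₄ × S₂` is such that none of the values
`e^{γ∨}((s,s′)θ)` for `γ∨ ∈ Θ⁺` equals `q^{1/2}` — i.e. none of
`θ_{s(1)}, θ_{s(2)}, θ_{s(3)}⁻¹, θ_{s(4)}⁻¹` (from the weights `e₁, e₂, −e₃, −e₄`),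
`θ_{s(1)}θ_{s(j)}θ′_{s′(k)}` for `j ∈ {2,3}`, `k ∈ {1,2}`, `θ_{s(1)}θ_{s(4)}θ′_{s′(1)}`,
and `θ_{s(2)}θ_{s(3)}θ′_{s′(1)}` equals `q^{1/2}` — then `s` is `i ↦ 5−i` and `s′` is
the transposition (the longest Weyl elements).  Indices are 0-based below. -/
theorem stmt_14 (q : ℝ) (hq : 1 < q)
    (s : Equiv.Perm (Fin 4)) (s' : Equiv.Perm (Fin 2)) :
    let r := Real.sqrt q
    let θ : Fin 4 → ℝ := ![r ^ 3, r, r⁻¹, (r ^ 3)⁻¹]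
    let θ' : Fin 2 → ℝ := ![r, r⁻¹]
    (θ (s 0) ≠ r) → (θ (s 1) ≠ r) → ((θ (s 2))⁻¹ ≠ r) → ((θ (s 3))⁻¹ ≠ r) →
    (∀ j ∈ ({1, 2} : Finset (Fin 4)), ∀ k : Fin 2, θ (s 0) * θ (s j) * θ' (s' k) ≠ r) →
    (θ (s 0) * θ (s 3) * θ' (s' 0) ≠ r) →
    (θ (s 1) * θ (s 2) * θ' (s' 0) ≠ r) →
    (∀ i, s i = i.rev) ∧ (∀ k, s' k = k.rev) := by
  intro r θ θ' h1 h2 h3 h4 h5 h6 h7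
  have hr : 1 < r := by
    have h0 := Real.sqrt_nonneg q
    have h1 : r ^ 2 = q := Real.sq_sqrt (by linarith)
    nlinarith
  have hr0 : r ≠ 0 := by linarith
  have hθ : ∀ i, θ i = r ^ F i := by
    intro i
    fin_cases i <;> simp [θ, F] <;> norm_cast
  have hθ' : ∀ k, θ' k = r ^ G k := by
    intro k
    fin_cases k <;> simp [θ', G]
  have hrr : r = r ^ (1 : ℤ) := (zpow_one r).symm
  have e1 : F (s 0) ≠ 1 := fun h => h1 (by rw [hθ, h, zpow_one])
  have e2 : F (s 1) ≠ 1 := fun h => h2 (by rw [hθ, h, zpow_one])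
  have e3 : -F (s 2) ≠ 1 := fun h => h3 (by rw [hθ, ← zpow_neg, h, zpow_one])
  have e4 : -F (s 3) ≠ 1 := fun h => h4 (by rw [hθ, ← zpow_neg, h, zpow_one])
  have e5 : ∀ j ∈ ({1, 2} : Finset (Fin 4)), ∀ k : Fin 2,
      F (s 0) + F (s j) + G (s' k) ≠ 1 := by
    intro j hj k h
    exact h5 j hj k (by rw [hθ, hθ, hθ', ← zpow_add₀ hr0, ← zpow_add₀ hr0, h, zpow_one])
  have e6 : F (s 0) + F (s 3) + G (s' 0) ≠ 1 := fun h =>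
    h6 (by rw [hθ, hθ, hθ', ← zpow_add₀ hr0, ← zpow_add₀ hr0, h, zpow_one])
  have e7 : F (s 1) + F (s 2) + G (s' 0) ≠ 1 := fun h =>
    h7 (by rw [hθ, hθ, hθ', ← zpow_add₀ hr0, ← zpow_add₀ hr0, h, zpow_one])
  exact key s s' e1 e2 e3 e4 e5 e6 e7
end

section
/- Consider the hyperoctahedral group W = (S₃ ⋉ {±1}³) × (S₂ ⋉ {±1}²) of signed permutations acting on ℤ³ ⊕ ℤ² (with standard bases e₁,e₂,e₃ and e₁′,e₂′). Let ρ = (3,2,1; 2,1) ∈ ℤ⁵, i.e., ⟨e_i, ρ⟩ = 4−i and ⟨e_j′, ρ⟩ = 3−j. Let Θ⁺ be the 16-element set of vectors γ = (±e₁±e₂±e₃)/2 + (±e₁′±e₂′)/2 consisting of: (e₁+e₂±e₃)/2 + (±e₁′±e₂′)/2 (8 elements), (e₁−e₂+e₃)/2 + (e₁′±e₂′)/2 and (e₁−e₂+e₃)/2 + (−e₁′+e₂′)/2 (3 elements), ±(e₁−e₂−e₃)/2 + (e₁′±e₂′)/2 (4 elements), and (−e₁+e₂−e₃)/2 + (e₁′+e₂′)/2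 (1 element). If w ∈ W satisfies ⟨w^{-1}γ, ρ⟩ ≠ 1/2 for every γ ∈ Θ⁺, then w = −1 (the longest element, acting by negating all five coordinates). -/
/-- The set `Θ⁺` of 16 weights `(±e₁±e₂±e₃)/2 + (±e₁′±e₂′)/2` for the model
`(GSp₆×GSp₄, (GSp₄×GSp₂)⁰)`, as vectors in `ℚ³ × ℚ²`. -/
def gspThetaPlus : List ((Fin 3 → ℚ) × (Fin 2 → ℚ)) :=
  [ (![1/2, 1/2, 1/2], ![1/2, 1/2]), (![1/2, 1/2, 1/2], ![1/2, -1/2]),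
    (![1/2, 1/2, 1/2], ![-1/2, 1/2]), (![1/2, 1/2, 1/2], ![-1/2, -1/2]),
    (![1/2, 1/2, -1/2], ![1/2, 1/2]), (![1/2, 1/2, -1/2], ![1/2, -1/2]),
    (![1/2, 1/2, -1/2], ![-1/2, 1/2]), (![1/2, 1/2, -1/2], ![-1/2, -1/2]),
    (![1/2, -1/2, 1/2], ![1/2, 1/2]), (![1/2, -1/2, 1/2], ![1/2, -1/2]),
    (![1/2, -1/2, 1/2], ![-1/2, 1/2]),
    (![1/2, -1/2, -1/2], ![1/2, 1/2]), (![1/2, -1/2, -1/2], ![1/2, -1/2]),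
    (![-1/2, 1/2, 1/2], ![1/2, 1/2]), (![-1/2, 1/2, 1/2], ![1/2, -1/2]),
    (![-1/2, 1/2, -1/2], ![1/2, 1/2]) ]


def gspTz : List ((Fin 3 → ℤ) × (Fin 2 → ℤ)) :=
  [ (![1,1,1], ![1,1]), (![1,1,1], ![1,-1]),
    (![1,1,1], ![-1,1]), (![1,1,1], ![-1,-1]),
    (![1,1,-1], ![1,1]), (![1,1,-1], ![1,-1]),
    (![1,1,-1], ![-1,1]), (![1,1,-1], ![-1,-1]),
    (![1,-1,1], ![1,1]), (![1,-1,1], ![1,-1]),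
    (![1,-1,1], ![-1,1]),
    (![1,-1,-1], ![1,1]), (![1,-1,-1], ![1,-1]),
    (![-1,1,1], ![1,1]), (![-1,1,1], ![1,-1]),
    (![-1,1,-1], ![1,1]) ]

set_option maxRecDepth 100000 in
set_option synthInstance.maxHeartbeats 1000000 in
set_option synthInstance.maxSize 2000 in
theorem gsp_auxZ : ∀ (f : Fin 3 → Fin 3) (ε : Fin 3 → Bool) (g : Fin 2 → Fin 2) (ε' : Fin 2 → Bool),
    Function.Injective f → Function.Injective g →
    (∀ t ∈ gspTz,
      (∑ i : Fin 3, (if ε i then (-1 : ℤ) else 1) * t.1 (f i) * (![3, 2, 1] : Fin 3 → ℤ) i)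
        + (∑ j : Fin 2, (if ε' j then (-1 : ℤ) else 1) * t.2 (g j) * (![2, 1] : Fin 2 → ℤ) j)
        ≠ 1) →
    (∀ i, f i = i) ∧ (∀ i, ε i = true) ∧ (∀ j, g j = j) ∧ (∀ j, ε' j = true) := by decide

theorem gsp_mem (t : (Fin 3 → ℤ) × (Fin 2 → ℤ)) (ht : t ∈ gspTz) :
    ((fun j => (t.1 j : ℚ)/2, fun j => (t.2 j : ℚ)/2) : (Fin 3 → ℚ) × (Fin 2 → ℚ))
      ∈ gspThetaPlus := by
  fin_cases ht <;>
    simp only [gspThetaPlus, List.mem_cons, List.not_mem_nil, or_false, Prod.mk.injEq] <;>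
    norm_num [funext_iff, Fin.forall_fin_succ, Prod.ext_iff]

set_option maxHeartbeats 2000000 in
/-- The vanishing claim for `(GSp₆×GSp₄, (GSp₄×GSp₂)⁰)` at `θ = δ_B^{1/2}`: a signed
permutation `u = w⁻¹` of `ℤ³ ⊕ ℤ²` is parametrized by `(σ, ε, σ′, ε′)`, acting by
`(u·v)ᵢ = sgn(εᵢ)·v(σ i)` on the first block and similarly on the second
(`ε i = true ↔ sign −1`).  With `ρ = (3,2,1;2,1)`, if `⟨u·γ, ρ⟩ ≠ 1/2` for every
`γ ∈ Θ⁺`, then `u = −1`, i.e. `σ = 1`, `σ′ = 1` and all signs are `−1`; hence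
`w = u⁻¹` is the longest element. -/
theorem stmt_15 (σ : Equiv.Perm (Fin 3)) (ε : Fin 3 → Bool)
    (σ' : Equiv.Perm (Fin 2)) (ε' : Fin 2 → Bool)
    (H : ∀ γ ∈ gspThetaPlus,
      (∑ i : Fin 3, (if ε i then (-1 : ℚ) else 1) * γ.1 (σ i) * (![3, 2, 1] : Fin 3 → ℚ) i)
        + (∑ j : Fin 2, (if ε' j then (-1 : ℚ) else 1) * γ.2 (σ' j) * (![2, 1] : Fin 2 → ℚ) j)
        ≠ 1 / 2) :
    σ = 1 ∧ (∀ i, ε i = true) ∧ σ' = 1 ∧ (∀ j, ε' j = true) := by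
  have key : ∀ (a : Fin 3 → ℤ) (b : Fin 2 → ℤ),
      (∑ i : Fin 3, (if ε i then (-1 : ℚ) else 1) * ((a (σ i) : ℚ)/2) * (![3, 2, 1] : Fin 3 → ℚ) i)
        + (∑ j : Fin 2, (if ε' j then (-1 : ℚ) else 1) * ((b (σ' j) : ℚ)/2) * (![2, 1] : Fin 2 → ℚ) j)
      = (((∑ i : Fin 3, (if ε i then (-1 : ℤ) else 1) * a (σ i) * (![3, 2, 1] : Fin 3 → ℤ) i)
          + ∑ j : Fin 2, (if ε' j then (-1 : ℤ) else 1) * b (σ' j) * (![2, 1] : Fin 2 → ℤ) j : ℤ) : ℚ)/2 := by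
    intro a b
    push_cast [apply_ite (Int.cast : ℤ → ℚ)]
    rw [Fin.sum_univ_three, Fin.sum_univ_two]
    rw [Fin.sum_univ_three, Fin.sum_univ_two]
    simp only [Matrix.cons_val_zero, Matrix.cons_val_one, Matrix.head_cons,
      Matrix.cons_val_two, Matrix.tail_cons]
    push_cast
    split_ifs <;> ring
  have Hz : ∀ t ∈ gspTz,
      (∑ i : Fin 3, (if ε i then (-1 : ℤ) else 1) * t.1 (σ i) * (![3, 2, 1] : Fin 3 → ℤ) i)
        + (∑ j : Fin 2, (if ε' j then (-1 : ℤ) else 1) * t.2 (σ' j) * (![2, 1] : Fin 2 → ℤ) j)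
        ≠ 1 := by
    intro t ht hc
    refine H _ (gsp_mem t ht) ?_
    show (∑ i : Fin 3, (if ε i then (-1 : ℚ) else 1) * ((t.1 (σ i) : ℚ)/2) * (![3, 2, 1] : Fin 3 → ℚ) i)
        + (∑ j : Fin 2, (if ε' j then (-1 : ℚ) else 1) * ((t.2 (σ' j) : ℚ)/2) * (![2, 1] : Fin 2 → ℚ) j) = 1/2
    rw [key t.1 t.2, hc]
    norm_num
  obtain ⟨h1, h2, h3, h4⟩ := gsp_auxZ σ ε σ' ε' σ.injective σ'.injective Hz
  exact ⟨Equiv.ext h1, h2, Equiv.ext h3, h4⟩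
end
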